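/- Let G be a gyrogroup with a gyronorm and gyronorm metric d(x,y) = ‖⊖x ⊕ y‖. Then the following are equivalent: (I) the right-gyrotranslation inequality d(x ⊕ a, y ⊕ a) ≤ d(x, y) holds for all a, x, y ∈ G; (II) Klee's condition d(x ⊕ y, a ⊕ b) ≤ d(x, a) + d(y, b) holds for all a, b, x, y ∈ G. -/

import Mathlib

/-- A gyrogroup: a set with a binary operation `add`, identity `e`, inversion `neg`,
and gyroautomorphisms `gyr` satisfying the gyrogroup axioms. -/
structure Gyrogroup (G : Type*) where
  add : G → G → G
  e : G
  neg : G → G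
  gyr : G → G → G → G
  e_add : ∀ a, add e a = a
  add_e : ∀ a, add a e = a
  neg_add : ∀ a, add (neg a) a = e
  add_neg : ∀ a, add a (neg a) = e
  gyr_bijective : ∀ a b, Function.Bijective (gyr a b)
  gyr_add : ∀ a b x y, gyr a b (add x y) = add (gyr a b x) (gyr a b y)
  left_gyroassoc : ∀ a b c, add a (add b c) = add (add a b) (gyr a b c)
  left_loop : ∀ a b, gyr (add a b) b = gyr a b

/-- A gyronorm on a gyrogroup. -/
structure Gyronorm {G : Type*} (gg : Gyrogroup G) where
  toFun : G → ℝ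
  nonneg : ∀ x, 0 ≤ toFun x
  eq_zero_iff : ∀ x, toFun x = 0 ↔ x = gg.e
  neg_eq : ∀ x, toFun (gg.neg x) = toFun x
  subadd : ∀ x y, toFun (gg.add x y) ≤ toFun x + toFun y
  gyr_eq : ∀ a b x, toFun (gg.gyr a b x) = toFun x

/-! Left gyrotranslations are isometries of the gyronorm metric and the metric satisfies the
triangle inequality, both by left gyroassociativity and gyration invariance of the norm.
Given (I), pass from `x ⊕ y` to `a ⊕ b` through `a ⊕ y`: the first leg is a right
gyrotranslation of `d x a`, the second a left gyrotranslation of `d y b`. Conversely (I) is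
Klee's condition with `b = y`, since `d y y = 0`. -/

namespace Gyrogroup

variable {G : Type*} (gg : Gyrogroup G)

theorem add_left_injective (a : G) : Function.Injective (gg.add a) := by
  intro x y h
  have h' : gg.add (gg.neg a) (gg.add a x) = gg.add (gg.neg a) (gg.add a y) := by rw [h]
  rw [gg.left_gyroassoc, gg.left_gyroassoc, gg.neg_add, gg.e_add, gg.e_add] at h'
  exact (gg.gyr_bijective _ _).1 h'

theorem gyr_e_left (b c : G) : gg.gyr gg.e b c = c := by
  apply gg.add_left_injective b
  simpa only [gg.e_add] using (gg.left_gyroassoc gg.e b c).symm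

theorem gyr_neg_right (a c : G) : gg.gyr a (gg.neg a) c = c := by
  rw [← gg.left_loop, gg.add_neg, gg.gyr_e_left]

theorem gyr_neg_left (a c : G) : gg.gyr (gg.neg a) a c = c := by
  rw [← gg.left_loop, gg.neg_add, gg.gyr_e_left]

theorem add_neg_cancel_left (a b : G) : gg.add a (gg.add (gg.neg a) b) = b := by
  rw [gg.left_gyroassoc, gg.add_neg, gg.e_add, gg.gyr_neg_right]

theorem neg_add_cancel_left (a b : G) : gg.add (gg.neg a) (gg.add a b) = b := by
  rw [gg.left_gyroassoc, gg.neg_add, gg.e_add, gg.gyr_neg_left]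

theorem add_eq_add_add_gyr (a b c : G) :
    gg.add a c = gg.add (gg.add a b) (gg.gyr a b (gg.add (gg.neg b) c)) := by
  rw [← gg.left_gyroassoc, gg.add_neg_cancel_left]

end Gyrogroup

namespace Gyronorm

variable {G : Type*} {gg : Gyrogroup G} (nm : Gyronorm gg)

def dist (x y : G) : ℝ := nm.toFun (gg.add (gg.neg x) y)

theorem dist_self (x : G) : nm.dist x x = 0 := by
  rw [dist, gg.neg_add, nm.eq_zero_iff]

theorem dist_triangle (x y z : G) : nm.dist x z ≤ nm.dist x y + nm.dist y z := by
  calc nm.dist x z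
      = nm.toFun (gg.add (gg.add (gg.neg x) y) (gg.gyr (gg.neg x) y (gg.add (gg.neg y) z))) := by
        rw [dist, ← gg.add_eq_add_add_gyr]
    _ ≤ nm.toFun (gg.add (gg.neg x) y) + nm.toFun (gg.gyr (gg.neg x) y (gg.add (gg.neg y) z)) :=
        nm.subadd _ _
    _ = nm.dist x y + nm.dist y z := by rw [nm.gyr_eq, dist, dist]

theorem dist_add_left (a x y : G) : nm.dist (gg.add a x) (gg.add a y) = nm.dist x y := by
  rw [dist, gg.add_eq_add_add_gyr a x y, gg.neg_add_cancel_left, nm.gyr_eq, dist]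

theorem dist_add_add_le_of_dist_add_right_le
    (h : ∀ a x y, nm.dist (gg.add x a) (gg.add y a) ≤ nm.dist x y) (a b x y : G) :
    nm.dist (gg.add x y) (gg.add a b) ≤ nm.dist x a + nm.dist y b :=
  calc nm.dist (gg.add x y) (gg.add a b)
      ≤ nm.dist (gg.add x y) (gg.add a y) + nm.dist (gg.add a y) (gg.add a b) :=
        nm.dist_triangle _ _ _
    _ ≤ nm.dist x a + nm.dist y b := by
      rw [nm.dist_add_left]
      exact add_le_add_left (h y x a) _

theorem dist_add_right_le_of_dist_add_add_le
    (h : ∀ a b x y, nm.dist (gg.add x y) (gg.add a b) ≤ nm.dist x a + nm.dist y b) (a x y : G) :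
    nm.dist (gg.add x a) (gg.add y a) ≤ nm.dist x y := by
  simpa only [nm.dist_self, add_zero] using h y a x a

end Gyronorm

/-- In a normed gyrogroup, the right-gyrotranslation inequality is equivalent to
Klee's condition. -/
theorem right_gyrotranslation_iff_klee {G : Type*} (gg : Gyrogroup G) (nm : Gyronorm gg)
    (d : G → G → ℝ) (hd : ∀ x y, d x y = nm.toFun (gg.add (gg.neg x) y)) :
    (∀ a x y, d (gg.add x a) (gg.add y a) ≤ d x y) ↔
      (∀ a b x y, d (gg.add x y) (gg.add a b) ≤ d x a + d y b) := by
  obtain rfl : d = nm.dist := funext₂ hd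
  exact ⟨nm.dist_add_add_le_of_dist_add_right_le, nm.dist_add_right_le_of_dist_add_add_le⟩
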